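/- arXiv:1211.0888 — 8 statements merged into one kernel-verified Lean document; each statement's English description precedes it below -/
import Mathlib

section
/- If (κ, α) : ℝ → ℝ × ℝ are differentiable functions satisfying the BPS equations κ' = (m/A)·κ·(1-κ²)·cos(2α) and α' = m·sin(2α) (with constants m, A > 0), then they also satisfy the second-order Euler–Lagrange equations κ'' = -(κ(1-κ²)/A)·((α')² + m²sin²(2α) - m²(1-3κ²)cos²(2α)/A) and ((1-κ²)²α')' = m²(1-κ²)²(1 - 2κ²/A)·sin(4α). -/
/-! Differentiate the right-hand sides of the BPS equations by the chain rule and substitute the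
BPS equations once more for `κ'` and `α'`: what remains is a polynomial identity in `κ`, `sin 2α`
and `cos 2α`, once `sin 4α = 2 sin 2α cos 2α`. -/

open Real

section BPSFlow

variable {κ α : ℝ → ℝ} {κ' α' x : ℝ}

theorem hasDerivAt_bps_kappa_rhs (hκ : HasDerivAt κ κ' x) (hα : HasDerivAt α α' x) (m A : ℝ) :
    HasDerivAt (fun y => m / A * κ y * (1 - κ y ^ 2) * cos (2 * α y))
      (m / A * ((1 - 3 * κ x ^ 2) * cos (2 * α x) * κ'
        - 2 * κ x * (1 - κ x ^ 2) * sin (2 * α x) * α')) x := by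
  refine (((hκ.const_mul (m / A)).fun_mul ((hκ.fun_pow 2).const_sub 1)).fun_mul
    (hα.const_mul 2).cos).congr_deriv ?_
  ring

theorem hasDerivAt_bps_weighted_alpha_rhs (hκ : HasDerivAt κ κ' x) (hα : HasDerivAt α α' x)
    (m : ℝ) :
    HasDerivAt (fun y => (1 - κ y ^ 2) ^ 2 * (m * sin (2 * α y)))
      (m * (1 - κ x ^ 2) * (2 * (1 - κ x ^ 2) * cos (2 * α x) * α'
        - 4 * κ x * sin (2 * α x) * κ')) x := by
  refine ((((hκ.fun_pow 2).const_sub 1).fun_pow 2).fun_mul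
    ((hα.const_mul 2).sin.const_mul m)).congr_deriv ?_
  ring

end BPSFlow

theorem bps_implies_euler_lagrange_general
    (m A : ℝ)
    (κ α : ℝ → ℝ) (hκ : ContDiff ℝ 2 κ) (hα : ContDiff ℝ 2 α)
    (hbps1 : ∀ x, deriv κ x = (m / A) * κ x * (1 - κ x ^ 2) * Real.cos (2 * α x))
    (hbps2 : ∀ x, deriv α x = m * Real.sin (2 * α x)) :
    (∀ x, deriv (deriv κ) x =
      -(κ x * (1 - κ x ^ 2) / A) *
        ((deriv α x) ^ 2 + m ^ 2 * Real.sin (2 * α x) ^ 2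
          - m ^ 2 * (1 - 3 * κ x ^ 2) * Real.cos (2 * α x) ^ 2 / A)) ∧
    (∀ x, deriv (fun y => (1 - κ y ^ 2) ^ 2 * deriv α y) x =
      m ^ 2 * (1 - κ x ^ 2) ^ 2 * (1 - 2 * κ x ^ 2 / A) * Real.sin (4 * α x)) := by
  have hκ' (x : ℝ) : HasDerivAt κ (deriv κ x) x :=
    (hκ.differentiable two_ne_zero x).hasDerivAt
  have hα' (x : ℝ) : HasDerivAt α (deriv α x) x :=
    (hα.differentiable two_ne_zero x).hasDerivAt
  refine ⟨fun x => ?_, fun x => ?_⟩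
  · rw [funext hbps1, (hasDerivAt_bps_kappa_rhs (hκ' x) (hα' x) m A).deriv, hbps1, hbps2]
    ring
  · have hweighted : (fun y => (1 - κ y ^ 2) ^ 2 * deriv α y) =
        fun y => (1 - κ y ^ 2) ^ 2 * (m * sin (2 * α y)) := by
      simp only [hbps2]
    rw [hweighted, (hasDerivAt_bps_weighted_alpha_rhs (hκ' x) (hα' x) m).deriv, hbps1, hbps2,
      show 4 * α x = 2 * (2 * α x) by ring, sin_two_mul (2 * α x)]
    ring

theorem bps_implies_euler_lagrange
    (m A : ℝ) (hm : 0 < m) (hA : 0 < A)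
    (κ α : ℝ → ℝ) (hκ : ContDiff ℝ 2 κ) (hα : ContDiff ℝ 2 α)
    (hbps1 : ∀ x, deriv κ x = (m / A) * κ x * (1 - κ x ^ 2) * Real.cos (2 * α x))
    (hbps2 : ∀ x, deriv α x = m * Real.sin (2 * α x)) :
    (∀ x, deriv (deriv κ) x =
      -(κ x * (1 - κ x ^ 2) / A) *
        ((deriv α x) ^ 2 + m ^ 2 * Real.sin (2 * α x) ^ 2
          - m ^ 2 * (1 - 3 * κ x ^ 2) * Real.cos (2 * α x) ^ 2 / A)) ∧
    (∀ x, deriv (fun y => (1 - κ y ^ 2) ^ 2 * deriv α y) x =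
      m ^ 2 * (1 - κ x ^ 2) ^ 2 * (1 - 2 * κ x ^ 2 / A) * Real.sin (4 * α x)) :=
  bps_implies_euler_lagrange_general m A κ α hκ hα hbps1 hbps2
end

section
/- For m, A, r > 0 and smooth functions κ, α : ℝ → ℝ, the pointwise energy density identity holds: r·(4A(κ')² + 2(1-κ²)²(α')² + 2m²(1-κ²)²sin²(2α) + 4m²κ²(1-κ²)²cos²(2α)/A) = r·(4A·(κ' - (m/A)κ(1-κ²)cos(2α))² + 2(1-κ²)²(α' - m·sin(2α))²) - 2mr·((1-κ²)²cos(2α))'. -/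
open Real

theorem HasDerivAt.one_sub_sq_sq_mul_cos_two_mul {κ α : ℝ → ℝ} {κ' α' x : ℝ}
    (hκ : HasDerivAt κ κ' x) (hα : HasDerivAt α α' x) :
    HasDerivAt (fun y => (1 - κ y ^ 2) ^ 2 * Real.cos (2 * α y))
      (-(4 * κ x * κ' * (1 - κ x ^ 2) * Real.cos (2 * α x)
        + 2 * (1 - κ x ^ 2) ^ 2 * Real.sin (2 * α x) * α')) x := by
  have hprofile : HasDerivAt (fun y => (1 - κ y ^ 2) ^ 2) (-(4 * κ x * κ' * (1 - κ x ^ 2))) x :=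
    (((hasDerivAt_const x 1).fun_sub (hκ.fun_pow 2)).fun_pow 2).congr_deriv (by push_cast; ring)
  have hphase : HasDerivAt (fun y => Real.cos (2 * α y)) (-Real.sin (2 * α x) * (2 * α')) x :=
    (Real.hasDerivAt_cos _).comp x (hα.const_mul 2)
  exact (hprofile.fun_mul hphase).congr_deriv (by ring)

/- Expanding the two squares, their cross terms add up to `2 m r` times the derivative of
`(1 - κ²)² cos (2α)` computed above, with `k' = κ'`, `a' = α'`, `c = cos (2α)`, `s = sin (2α)`. -/
theorem kink_energy_density_eq_sq_add_sq_sub {A : ℝ} (hA : A ≠ 0) (m r k k' a' c s : ℝ) :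
    r * (4 * A * k' ^ 2 + 2 * (1 - k ^ 2) ^ 2 * a' ^ 2 + 2 * m ^ 2 * (1 - k ^ 2) ^ 2 * s ^ 2
        + 4 * m ^ 2 * k ^ 2 * (1 - k ^ 2) ^ 2 * c ^ 2 / A)
      = r * (4 * A * (k' - (m / A) * k * (1 - k ^ 2) * c) ^ 2
          + 2 * (1 - k ^ 2) ^ 2 * (a' - m * s) ^ 2)
        - 2 * m * r * -(4 * k * k' * (1 - k ^ 2) * c + 2 * (1 - k ^ 2) ^ 2 * s * a') := by
  field_simp
  ring

theorem bogomolny_completion_general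
    (m A r : ℝ) (hA : 0 < A)
    (κ α : ℝ → ℝ) (hκ : Differentiable ℝ κ) (hα : Differentiable ℝ α) :
    ∀ x, r * (4 * A * (deriv κ x) ^ 2 + 2 * (1 - κ x ^ 2) ^ 2 * (deriv α x) ^ 2
        + 2 * m ^ 2 * (1 - κ x ^ 2) ^ 2 * Real.sin (2 * α x) ^ 2
        + 4 * m ^ 2 * κ x ^ 2 * (1 - κ x ^ 2) ^ 2 * Real.cos (2 * α x) ^ 2 / A)
      = r * (4 * A * (deriv κ x - (m / A) * κ x * (1 - κ x ^ 2) * Real.cos (2 * α x)) ^ 2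
          + 2 * (1 - κ x ^ 2) ^ 2 * (deriv α x - m * Real.sin (2 * α x)) ^ 2)
        - 2 * m * r * deriv (fun y => (1 - κ y ^ 2) ^ 2 * Real.cos (2 * α y)) x := by
  intro x
  rw [((hκ x).hasDerivAt.one_sub_sq_sq_mul_cos_two_mul (hα x).hasDerivAt).deriv]
  exact kink_energy_density_eq_sq_add_sq_sub hA.ne' m r _ _ _ _ _

theorem bogomolny_completion
    (m A r : ℝ) (hm : 0 < m) (hA : 0 < A) (hr : 0 < r)
    (κ α : ℝ → ℝ) (hκ : Differentiable ℝ κ) (hα : Differentiable ℝ α) :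
    ∀ x, r * (4 * A * (deriv κ x) ^ 2 + 2 * (1 - κ x ^ 2) ^ 2 * (deriv α x) ^ 2
        + 2 * m ^ 2 * (1 - κ x ^ 2) ^ 2 * Real.sin (2 * α x) ^ 2
        + 4 * m ^ 2 * κ x ^ 2 * (1 - κ x ^ 2) ^ 2 * Real.cos (2 * α x) ^ 2 / A)
      = r * (4 * A * (deriv κ x - (m / A) * κ x * (1 - κ x ^ 2) * Real.cos (2 * α x)) ^ 2
          + 2 * (1 - κ x ^ 2) ^ 2 * (deriv α x - m * Real.sin (2 * α x)) ^ 2)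
        - 2 * m * r * deriv (fun y => (1 - κ y ^ 2) ^ 2 * Real.cos (2 * α y)) x :=
  bogomolny_completion_general m A r hA κ α hκ hα
end

section
/- Let m, A, r > 0 and let κ, α : ℝ → ℝ be smooth with boundary conditions κ(±∞) = 0, α(-∞) = 0, α(+∞) = π/2 (as limits). Then the kink energy E(κ,α) = ∫_{-∞}^{∞} r{4A(κ')² + 2(1-κ²)²(α')² + 2m²(1-κ²)²sin²(2α) + 4m²κ²(1-κ²)²cos²(2α)/A} dx satisfies E(κ,α) ≥ 4mr. -/
/-!
Bogomolny argument. The energy density dominates `2 r W'` for the potential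
`W = -m cos (2α) (1 - κ²)²`: the difference is the sum of the squares
`r A (2κ' - 2mκ(1-κ²)cos 2α / A)²` and `2r (1-κ²)² (α' - m sin 2α)²`.
Integrating, the energy is at least `2r (W(+∞) - W(-∞)) = 2r (m - (-m))`.
-/

open Real Filter MeasureTheory Topology

theorem sub_le_integral_of_hasDerivAt_of_le_of_tendsto {g g' φ : ℝ → ℝ} {a b : ℝ}
    (hderiv : ∀ x, HasDerivAt g (g' x) x) (hle : ∀ x, g' x ≤ φ x) (hφ : Integrable φ)
    (hbot : Tendsto g atBot (𝓝 a)) (htop : Tendsto g atTop (𝓝 b)) :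
    b - a ≤ ∫ x, φ x := by
  have hcont : Continuous g := continuous_iff_continuousAt.2 fun x ↦ (hderiv x).continuousAt
  have hsymm : ∀ T, 0 ≤ T → g T - g (-T) ≤ ∫ x in (-T)..T, φ x := fun T hT ↦
    intervalIntegral.sub_le_integral_of_hasDeriv_right_of_le (by linarith) hcont.continuousOn
      (fun x _ ↦ (hderiv x).hasDerivWithinAt) hφ.integrableOn (fun x _ ↦ hle x)
  refine le_of_tendsto_of_tendsto (htop.sub (hbot.comp tendsto_neg_atTop_atBot))
    (intervalIntegral_tendsto_integral hφ tendsto_neg_atTop_atBot tendsto_id) ?_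
  filter_upwards [eventually_ge_atTop 0] with T hT using hsymm T hT

theorem two_mul_kink_derivative_le_density {A r : ℝ} (hA : 0 < A) (hr : 0 ≤ r)
    (m k k' a' c s : ℝ) :
    2 * r * (2 * m * (1 - k ^ 2) ^ 2 * s * a' + 4 * m * k * k' * (1 - k ^ 2) * c) ≤
      r * (4 * A * k' ^ 2 + 2 * (1 - k ^ 2) ^ 2 * a' ^ 2 + 2 * m ^ 2 * (1 - k ^ 2) ^ 2 * s ^ 2
        + 4 * m ^ 2 * k ^ 2 * (1 - k ^ 2) ^ 2 * c ^ 2 / A) := by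
  have hsq : r * (4 * A * k' ^ 2 + 2 * (1 - k ^ 2) ^ 2 * a' ^ 2
      + 2 * m ^ 2 * (1 - k ^ 2) ^ 2 * s ^ 2 + 4 * m ^ 2 * k ^ 2 * (1 - k ^ 2) ^ 2 * c ^ 2 / A)
      - 2 * r * (2 * m * (1 - k ^ 2) ^ 2 * s * a' + 4 * m * k * k' * (1 - k ^ 2) * c)
      = r * (A * (2 * k' - 2 * m * k * (1 - k ^ 2) * c / A) ^ 2
        + 2 * ((1 - k ^ 2) * (a' - m * s)) ^ 2) := by
    field_simp
    ring
  exact sub_nonneg.1 (hsq ▸ by positivity)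

noncomputable def kinkPotential (m : ℝ) (κ α : ℝ → ℝ) (x : ℝ) : ℝ :=
  -m * cos (2 * α x) * (1 - κ x ^ 2) ^ 2

section kinkPotential

variable {κ α : ℝ → ℝ}

theorem hasDerivAt_kinkPotential (m : ℝ) {κ' α' x : ℝ} (hκ : HasDerivAt κ κ' x)
    (hα : HasDerivAt α α' x) :
    HasDerivAt (kinkPotential m κ α)
      (2 * m * (1 - κ x ^ 2) ^ 2 * sin (2 * α x) * α'
        + 4 * m * κ x * κ' * (1 - κ x ^ 2) * cos (2 * α x)) x := by
  have h := ((hα.const_mul 2).cos.const_mul (-m)).fun_mul (((hκ.fun_pow 2).const_sub 1).fun_pow 2)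
  refine h.congr_deriv ?_
  push_cast
  ring

theorem tendsto_kinkPotential (m : ℝ) {l : Filter ℝ} {a : ℝ} (hκ : Tendsto κ l (𝓝 0))
    (hα : Tendsto α l (𝓝 a)) : Tendsto (kinkPotential m κ α) l (𝓝 (-m * cos (2 * a))) := by
  have hcos := (continuous_cos.tendsto (2 * a)).comp (hα.const_mul 2)
  rw [show -m * cos (2 * a) = -m * cos (2 * a) * (1 - 0 ^ 2) ^ 2 by norm_num]
  exact (hcos.const_mul (-m)).mul (((hκ.pow 2).const_sub 1).pow 2)

end kinkPotential

theorem kink_energy_lower_bound_general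
    (m A r : ℝ) (hA : 0 < A) (hr : 0 < r)
    (κ α : ℝ → ℝ) (hκ : ContDiff ℝ 1 κ) (hα : ContDiff ℝ 1 α)
    (e : ℝ → ℝ)
    (he : ∀ x, e x = r * (4 * A * (deriv κ x) ^ 2 + 2 * (1 - κ x ^ 2) ^ 2 * (deriv α x) ^ 2
        + 2 * m ^ 2 * (1 - κ x ^ 2) ^ 2 * Real.sin (2 * α x) ^ 2
        + 4 * m ^ 2 * κ x ^ 2 * (1 - κ x ^ 2) ^ 2 * Real.cos (2 * α x) ^ 2 / A))
    (hint : Integrable e)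
    (hκbot : Tendsto κ atBot (nhds 0)) (hκtop : Tendsto κ atTop (nhds 0))
    (hαbot : Tendsto α atBot (nhds 0)) (hαtop : Tendsto α atTop (nhds (Real.pi / 2))) :
    4 * m * r ≤ ∫ x, e x := by
  have hderiv x := ((hasDerivAt_kinkPotential m ((hκ.differentiable one_ne_zero x).hasDerivAt)
    ((hα.differentiable one_ne_zero x).hasDerivAt)).const_mul (2 * r))
  have hle x := (two_mul_kink_derivative_le_density hA hr.le m (κ x) (deriv κ x) (deriv α x)
    (cos (2 * α x)) (sin (2 * α x))).trans_eq (he x).symm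
  have hbot := (tendsto_kinkPotential m hκbot hαbot).const_mul (2 * r)
  have htop := (tendsto_kinkPotential m hκtop hαtop).const_mul (2 * r)
  have hlimits := sub_le_integral_of_hasDerivAt_of_le_of_tendsto hderiv hle hint hbot htop
  rw [mul_zero, cos_zero, mul_div_cancel₀ π two_ne_zero, cos_pi] at hlimits
  linarith

theorem kink_energy_lower_bound
    (m A r : ℝ) (hm : 0 < m) (hA : 0 < A) (hr : 0 < r)
    (κ α : ℝ → ℝ) (hκ : ContDiff ℝ 1 κ) (hα : ContDiff ℝ 1 α)
    (e : ℝ → ℝ)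
    (he : ∀ x, e x = r * (4 * A * (deriv κ x) ^ 2 + 2 * (1 - κ x ^ 2) ^ 2 * (deriv α x) ^ 2
        + 2 * m ^ 2 * (1 - κ x ^ 2) ^ 2 * Real.sin (2 * α x) ^ 2
        + 4 * m ^ 2 * κ x ^ 2 * (1 - κ x ^ 2) ^ 2 * Real.cos (2 * α x) ^ 2 / A))
    (hint : Integrable e)
    (hκbot : Tendsto κ atBot (nhds 0)) (hκtop : Tendsto κ atTop (nhds 0))
    (hαbot : Tendsto α atBot (nhds 0)) (hαtop : Tendsto α atTop (nhds (Real.pi / 2))) :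
    4 * m * r ≤ ∫ x, e x :=
  kink_energy_lower_bound_general m A r hA hr κ α hκ hα e he hint hκbot hκtop hαbot hαtop
end

section
/- Equality E(κ,α) = 4mr in the Bogomolny bound holds if and only if κ and α satisfy the BPS equations κ' = (m/A)κ(1-κ²)cos(2α) and α' = m·sin(2α) everywhere. -/
/-! Bogomolny's trick. Completing squares, the energy density is `r` times the squared BPS defect
plus `r` times the derivative of `W = -2m(1-κ²)² cos 2α` along the profile. Since `W` runs from
`-2m` at `-∞` to `2m` at `+∞`, `E = r ∫ defect + 4mr`, so equality holds iff the continuous,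
nonnegative defect vanishes identically, i.e. `κ' = (m/A)κ(1-κ²)cos 2α` and
`(1-κ²)(α' - m sin 2α) = 0`. The first equation is a linear ODE for `1-κ²`, which therefore
vanishes everywhere or nowhere; as `κ → 0` it vanishes nowhere, leaving `α' = m sin 2α`. -/

open Real Filter MeasureTheory Topology

noncomputable section

variable (m A : ℝ)

def kinkDensity (k dk a da : ℝ) : ℝ :=
  4 * A * dk ^ 2 + 2 * (1 - k ^ 2) ^ 2 * da ^ 2 + 2 * m ^ 2 * (1 - k ^ 2) ^ 2 * sin (2 * a) ^ 2
    + 4 * m ^ 2 * k ^ 2 * (1 - k ^ 2) ^ 2 * cos (2 * a) ^ 2 / A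

def bpsDefect (k dk a da : ℝ) : ℝ :=
  4 * A * (dk - m / A * k * (1 - k ^ 2) * cos (2 * a)) ^ 2
    + 2 * (1 - k ^ 2) ^ 2 * (da - m * sin (2 * a)) ^ 2

def bogomolnyPotential (k a : ℝ) : ℝ := -2 * m * (1 - k ^ 2) ^ 2 * cos (2 * a)

def bogomolnyPotentialRate (k dk a da : ℝ) : ℝ :=
  8 * m * dk * k * (1 - k ^ 2) * cos (2 * a) + 4 * m * (1 - k ^ 2) ^ 2 * da * sin (2 * a)

variable {m A}

theorem kinkDensity_eq_bpsDefect_add (hA : A ≠ 0) (k dk a da : ℝ) :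
    kinkDensity m A k dk a da = bpsDefect m A k dk a da + bogomolnyPotentialRate m k dk a da := by
  unfold kinkDensity bpsDefect bogomolnyPotentialRate
  field_simp
  ring

theorem bpsDefect_nonneg (hA : 0 ≤ A) (k dk a da : ℝ) : 0 ≤ bpsDefect m A k dk a da := by
  unfold bpsDefect
  positivity

theorem abs_bogomolnyPotentialRate_le (hA : 0 < A) (k dk a da : ℝ) :
    |bogomolnyPotentialRate m k dk a da| ≤ kinkDensity m A k dk a da := by
  have hpos := kinkDensity_eq_bpsDefect_add (m := m) hA.ne' k dk a da
  have hneg := kinkDensity_eq_bpsDefect_add (m := -m) hA.ne' k dk a da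
  have hdensity : kinkDensity (-m) A k dk a da = kinkDensity m A k dk a da := by
    simp only [kinkDensity, neg_sq]
  have hrate : bogomolnyPotentialRate (-m) k dk a da = -bogomolnyPotentialRate m k dk a da := by
    simp only [bogomolnyPotentialRate]; ring
  rw [abs_le]
  constructor <;> linarith [bpsDefect_nonneg (m := m) hA.le k dk a da,
    bpsDefect_nonneg (m := -m) hA.le k dk a da]

theorem bpsDefect_eq_zero_iff (hA : 0 < A) (k dk a da : ℝ) :
    bpsDefect m A k dk a da = 0 ↔
      dk = m / A * k * (1 - k ^ 2) * cos (2 * a) ∧ (1 - k ^ 2) * (da - m * sin (2 * a)) = 0 := by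
  have h4A : (0 : ℝ) < 4 * A := by positivity
  rw [bpsDefect, show 2 * (1 - k ^ 2) ^ 2 * (da - m * sin (2 * a)) ^ 2
      = 2 * ((1 - k ^ 2) * (da - m * sin (2 * a))) ^ 2 by ring,
    add_eq_zero_iff_of_nonneg (by positivity) (by positivity)]
  simp [h4A.ne', sub_eq_zero]

theorem Continuous.bpsDefect {κ κ' α α' : ℝ → ℝ} (hκ : Continuous κ) (hκ' : Continuous κ')
    (hα : Continuous α) (hα' : Continuous α') :
    Continuous fun x ↦ bpsDefect m A (κ x) (κ' x) (α x) (α' x) := by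
  unfold _root_.bpsDefect
  fun_prop

theorem Continuous.bogomolnyPotentialRate {κ κ' α α' : ℝ → ℝ} (hκ : Continuous κ)
    (hκ' : Continuous κ') (hα : Continuous α) (hα' : Continuous α') :
    Continuous fun x ↦ bogomolnyPotentialRate m (κ x) (κ' x) (α x) (α' x) := by
  unfold _root_.bogomolnyPotentialRate
  fun_prop

theorem HasDerivAt.bogomolnyPotential {κ α : ℝ → ℝ} {dk da x : ℝ} (hκ : HasDerivAt κ dk x)
    (hα : HasDerivAt α da x) :
    HasDerivAt (fun y ↦ bogomolnyPotential m (κ y) (α y))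
      (bogomolnyPotentialRate m (κ x) dk (α x) da) x := by
  have hcos := (hasDerivAt_cos (2 * α x)).comp x (hα.const_mul 2)
  refine (((((hκ.fun_pow 2).const_sub 1).fun_pow 2).const_mul (-2 * m)).fun_mul hcos).congr_deriv
    ?_
  simp only [bogomolnyPotentialRate, Function.comp_apply]
  push_cast
  ring

theorem Filter.Tendsto.bogomolnyPotential {ι : Type*} {l : Filter ι} {κ α : ι → ℝ}
    {k a : ℝ} (hκ : Tendsto κ l (𝓝 k)) (hα : Tendsto α l (𝓝 a)) :
    Tendsto (fun y ↦ bogomolnyPotential m (κ y) (α y)) l (𝓝 (bogomolnyPotential m k a)) :=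
  (((tendsto_const_nhds.sub (hκ.pow 2)).pow 2).const_mul _).mul
    ((continuous_cos.tendsto _).comp (hα.const_mul 2))

theorem integral_bogomolnyPotentialRate {κ α κ' α' : ℝ → ℝ}
    (hκ : ∀ x, HasDerivAt κ (κ' x) x) (hα : ∀ x, HasDerivAt α (α' x) x)
    (hint : Integrable fun x ↦ bogomolnyPotentialRate m (κ x) (κ' x) (α x) (α' x))
    (hκbot : Tendsto κ atBot (𝓝 0)) (hκtop : Tendsto κ atTop (𝓝 0))
    (hαbot : Tendsto α atBot (𝓝 0)) (hαtop : Tendsto α atTop (𝓝 (π / 2))) :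
    ∫ x, bogomolnyPotentialRate m (κ x) (κ' x) (α x) (α' x) = 4 * m := by
  rw [integral_of_hasDerivAt_of_tendsto (fun x ↦ (hκ x).bogomolnyPotential (hα x)) hint
    (hκbot.bogomolnyPotential hαbot) (hκtop.bogomolnyPotential hαtop)]
  simp only [bogomolnyPotential, mul_div_cancel₀ π two_ne_zero, cos_pi, mul_zero, cos_zero]
  ring

theorem eq_zero_of_hasDerivAt_eq_mul {g c : ℝ → ℝ} (hc : Continuous c)
    (hg : ∀ x, HasDerivAt g (c x * g x) x) {x₀ : ℝ} (hx₀ : g x₀ = 0) (x : ℝ) : g x = 0 := by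
  -- `g(x) exp (-∫₀ˣ c)` has zero derivative
  set C : ℝ → ℝ := fun x ↦ ∫ t in (0 : ℝ)..x, c t
  have hC : ∀ x, HasDerivAt C (c x) x := fun x ↦ (hc.integral_hasStrictDerivAt 0 x).hasDerivAt
  have hconst : ∀ x, HasDerivAt (fun y ↦ g y * exp (-C y)) 0 x := fun x ↦ by
    refine ((hg x).fun_mul (hC x).neg.exp).congr_deriv ?_
    ring
  have := is_const_of_deriv_eq_zero (fun y ↦ (hconst y).differentiableAt)
    (fun y ↦ (hconst y).deriv) x x₀
  simpa [hx₀, exp_ne_zero] using this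

theorem sq_ne_one_of_hasDerivAt_eq_mul {κ f : ℝ → ℝ} (hf : Continuous f)
    (hκ : ∀ x, HasDerivAt κ (f x * (1 - κ x ^ 2)) x) {x₀ : ℝ} (hx₀ : κ x₀ ^ 2 ≠ 1) (x : ℝ) :
    κ x ^ 2 ≠ 1 := by
  have hκc : Continuous κ := continuous_iff_continuousAt.2 fun x ↦ (hκ x).continuousAt
  have hg : ∀ y, HasDerivAt (fun y ↦ 1 - κ y ^ 2) (-2 * κ y * f y * (1 - κ y ^ 2)) y := fun y ↦
    (((hκ y).fun_pow 2).const_sub 1).congr_deriv (by push_cast; ring)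
  intro hx
  have := eq_zero_of_hasDerivAt_eq_mul (by fun_prop) hg (sub_eq_zero.2 hx.symm) x₀
  exact hx₀ (by linarith)

theorem integrable_bpsDefect_and_integral_kinkDensity_eq (hA : 0 < A) {κ α : ℝ → ℝ}
    (hκ : ContDiff ℝ 1 κ) (hα : ContDiff ℝ 1 α)
    (hint : Integrable fun x ↦ kinkDensity m A (κ x) (deriv κ x) (α x) (deriv α x))
    (hκbot : Tendsto κ atBot (𝓝 0)) (hκtop : Tendsto κ atTop (𝓝 0))
    (hαbot : Tendsto α atBot (𝓝 0)) (hαtop : Tendsto α atTop (𝓝 (π / 2))) :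
    (Integrable fun x ↦ bpsDefect m A (κ x) (deriv κ x) (α x) (deriv α x)) ∧
      ∫ x, kinkDensity m A (κ x) (deriv κ x) (α x) (deriv α x)
        = (∫ x, bpsDefect m A (κ x) (deriv κ x) (α x) (deriv α x)) + 4 * m := by
  have hrate : Integrable fun x ↦ bogomolnyPotentialRate m (κ x) (deriv κ x) (α x) (deriv α x) :=
    hint.mono' (hκ.continuous.bogomolnyPotentialRate (hκ.continuous_deriv le_rfl) hα.continuous
      (hα.continuous_deriv le_rfl)).aestronglyMeasurable
      (ae_of_all _ fun x ↦ abs_bogomolnyPotentialRate_le hA _ _ _ _)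
  have hsplit (x : ℝ) :=
    kinkDensity_eq_bpsDefect_add (m := m) hA.ne' (κ x) (deriv κ x) (α x) (deriv α x)
  have hdefect : Integrable fun x ↦ bpsDefect m A (κ x) (deriv κ x) (α x) (deriv α x) :=
    (hint.sub hrate).congr <| ae_of_all _ fun x ↦ by
      simp only [Pi.sub_apply, hsplit, add_sub_cancel_right]
  refine ⟨hdefect, ?_⟩
  simp only [hsplit]
  rw [integral_add hdefect hrate, integral_bogomolnyPotentialRate
    (fun x ↦ ((hκ.differentiable one_ne_zero) x).hasDerivAt)
    (fun x ↦ ((hα.differentiable one_ne_zero) x).hasDerivAt) hrate hκbot hκtop hαbot hαtop]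

theorem forall_bpsDefect_eq_zero_iff (hA : 0 < A) {κ α κ' α' : ℝ → ℝ}
    (hκ : ∀ x, HasDerivAt κ (κ' x) x) (hα : Continuous α) (hκbot : Tendsto κ atBot (𝓝 0)) :
    (∀ x, bpsDefect m A (κ x) (κ' x) (α x) (α' x) = 0) ↔
      ∀ x, κ' x = m / A * κ x * (1 - κ x ^ 2) * cos (2 * α x) ∧ α' x = m * sin (2 * α x) := by
  simp only [bpsDefect_eq_zero_iff hA]
  refine ⟨fun hbps ↦ ?_, fun hbps x ↦ ⟨(hbps x).1, by rw [(hbps x).2, sub_self, mul_zero]⟩⟩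
  have hκc : Continuous κ := continuous_iff_continuousAt.2 fun x ↦ (hκ x).continuousAt
  obtain ⟨x₀, hx₀⟩ : ∃ x₀, κ x₀ ^ 2 ≠ 1 :=
    ((hκbot.pow 2).eventually_ne (by norm_num)).exists
  have hvacuum (x : ℝ) : 1 - κ x ^ 2 ≠ 0 :=
    sub_ne_zero.2 (sq_ne_one_of_hasDerivAt_eq_mul (f := fun x ↦ m / A * κ x * cos (2 * α x))
      (by fun_prop) (fun x ↦ (hκ x).congr_deriv (by rw [(hbps x).1]; ring)) hx₀ x).symm
  exact fun x ↦ ⟨(hbps x).1, sub_eq_zero.1 ((mul_eq_zero.1 (hbps x).2).resolve_left (hvacuum x))⟩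

end

theorem kink_energy_saturation_iff_bps_general
    (m A r : ℝ) (hA : 0 < A) (hr : 0 < r)
    (κ α : ℝ → ℝ) (hκ : ContDiff ℝ 1 κ) (hα : ContDiff ℝ 1 α)
    (e : ℝ → ℝ)
    (he : ∀ x, e x = r * (4 * A * (deriv κ x) ^ 2 + 2 * (1 - κ x ^ 2) ^ 2 * (deriv α x) ^ 2
        + 2 * m ^ 2 * (1 - κ x ^ 2) ^ 2 * Real.sin (2 * α x) ^ 2
        + 4 * m ^ 2 * κ x ^ 2 * (1 - κ x ^ 2) ^ 2 * Real.cos (2 * α x) ^ 2 / A))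
    (hint : Integrable e)
    (hκbot : Tendsto κ atBot (nhds 0)) (hκtop : Tendsto κ atTop (nhds 0))
    (hαbot : Tendsto α atBot (nhds 0)) (hαtop : Tendsto α atTop (nhds (Real.pi / 2))) :
    (∫ x, e x) = 4 * m * r ↔
      (∀ x, deriv κ x = (m / A) * κ x * (1 - κ x ^ 2) * Real.cos (2 * α x) ∧
            deriv α x = m * Real.sin (2 * α x)) := by
  set K := fun x ↦ kinkDensity m A (κ x) (deriv κ x) (α x) (deriv α x)
  set D := fun x ↦ bpsDefect m A (κ x) (deriv κ x) (α x) (deriv α x)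
  have he' : e = fun x ↦ r * K x := funext he
  have hK : Integrable K := by simpa [he', hr.ne'] using hint.const_mul r⁻¹
  obtain ⟨hD, hKD⟩ :=
    integrable_bpsDefect_and_integral_kinkDensity_eq hA hκ hα hK hκbot hκtop hαbot hαtop
  have hDc : Continuous D := hκ.continuous.bpsDefect (hκ.continuous_deriv le_rfl) hα.continuous
    (hα.continuous_deriv le_rfl)
  calc (∫ x, e x) = 4 * m * r ↔ ∫ x, D x = 0 := by
        rw [he', integral_const_mul, hKD, show 4 * m * r = r * (0 + 4 * m) by ring,
          mul_right_inj' hr.ne', add_left_inj]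
    _ ↔ D = 0 := by
        rw [integral_eq_zero_iff_of_nonneg (fun x ↦ bpsDefect_nonneg hA.le _ _ _ _) hD,
          hDc.ae_eq_iff_eq volume continuous_zero]
    _ ↔ _ := funext_iff.trans <| forall_bpsDefect_eq_zero_iff hA
        (fun x ↦ ((hκ.differentiable one_ne_zero) x).hasDerivAt) hα.continuous hκbot

theorem kink_energy_saturation_iff_bps
    (m A r : ℝ) (hm : 0 < m) (hA : 0 < A) (hr : 0 < r)
    (κ α : ℝ → ℝ) (hκ : ContDiff ℝ 1 κ) (hα : ContDiff ℝ 1 α)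
    (e : ℝ → ℝ)
    (he : ∀ x, e x = r * (4 * A * (deriv κ x) ^ 2 + 2 * (1 - κ x ^ 2) ^ 2 * (deriv α x) ^ 2
        + 2 * m ^ 2 * (1 - κ x ^ 2) ^ 2 * Real.sin (2 * α x) ^ 2
        + 4 * m ^ 2 * κ x ^ 2 * (1 - κ x ^ 2) ^ 2 * Real.cos (2 * α x) ^ 2 / A))
    (hint : Integrable e)
    (hκbot : Tendsto κ atBot (nhds 0)) (hκtop : Tendsto κ atTop (nhds 0))
    (hαbot : Tendsto α atBot (nhds 0)) (hαtop : Tendsto α atTop (nhds (Real.pi / 2))) :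
    (∫ x, e x) = 4 * m * r ↔
      (∀ x, deriv κ x = (m / A) * κ x * (1 - κ x ^ 2) * Real.cos (2 * α x) ∧
            deriv α x = m * Real.sin (2 * α x)) :=
  kink_energy_saturation_iff_bps_general m A r hA hr κ α hκ hα e he hint hκbot hκtop hαbot hαtop
end

section
/- For any m > 0 and x₀ ∈ ℝ, the function α(x) = arctan(e^{2m(x-x₀)}) satisfies the differential equation α'(x) = m·sin(2α(x)) for all x ∈ ℝ, together with lim_{x→-∞} α(x) = 0 and lim_{x→+∞} α(x) = π/2. -/
/-!
With `t = exp (2m(x - x₀))` the chain rule gives `α' = 2m t / (1 + t²)`, and the double-angle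
formula turns `2t / (1 + t²)` into `sin (2 arctan t)`. The limits follow since `t → 0` as
`x → -∞` and `t → ∞` as `x → ∞`, where `arctan` tends to `π / 2`.
-/

open Real Filter

theorem Real.sin_two_mul_arctan (t : ℝ) : sin (2 * arctan t) = 2 * t / (1 + t ^ 2) := by
  have hsq : √(1 + t ^ 2) ^ 2 = 1 + t ^ 2 := sq_sqrt (by positivity)
  rw [sin_two_mul, sin_arctan, cos_arctan]
  field_simp
  rw [hsq]

theorem hasDerivAt_arctan_exp_mul_sub (m x₀ x : ℝ) :
    HasDerivAt (fun y => arctan (exp (2 * m * (y - x₀))))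
      (m * sin (2 * arctan (exp (2 * m * (x - x₀))))) x := by
  set t := exp (2 * m * (x - x₀))
  have hexp : HasDerivAt (fun y => exp (2 * m * (y - x₀))) (t * (2 * m)) x := by
    simpa using (((hasDerivAt_id x).sub_const x₀).const_mul (2 * m)).exp
  refine ((hasDerivAt_arctan t).comp x hexp).congr_deriv ?_
  rw [sin_two_mul_arctan]
  ring

theorem tendsto_arctan_exp_mul_sub_atBot {c : ℝ} (hc : 0 < c) (x₀ : ℝ) :
    Tendsto (fun x => arctan (exp (c * (x - x₀)))) atBot (nhds 0) := by
  have hlin : Tendsto (fun x => c * (x - x₀)) atBot atBot :=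
    (tendsto_atBot_add_const_right _ _ tendsto_id).const_mul_atBot hc
  simpa [Function.comp_def] using
    (continuous_arctan.tendsto 0).comp (tendsto_exp_atBot.comp hlin)

theorem tendsto_arctan_exp_mul_sub_atTop {c : ℝ} (hc : 0 < c) (x₀ : ℝ) :
    Tendsto (fun x => arctan (exp (c * (x - x₀)))) atTop (nhds (π / 2)) := by
  have hlin : Tendsto (fun x => c * (x - x₀)) atTop atTop :=
    (tendsto_atTop_add_const_right _ _ tendsto_id).const_mul_atTop hc
  exact (tendsto_nhds_of_tendsto_nhdsWithin tendsto_arctan_atTop).comp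
    (tendsto_exp_atTop.comp hlin)

theorem arctan_exp_solves_alpha_ode
    (m x₀ : ℝ) (hm : 0 < m) :
    (∀ x, deriv (fun y => Real.arctan (Real.exp (2 * m * (y - x₀)))) x
        = m * Real.sin (2 * Real.arctan (Real.exp (2 * m * (x - x₀))))) ∧
    Tendsto (fun x => Real.arctan (Real.exp (2 * m * (x - x₀)))) atBot (nhds 0) ∧
    Tendsto (fun x => Real.arctan (Real.exp (2 * m * (x - x₀)))) atTop (nhds (Real.pi / 2)) := by
  have h2m : 0 < 2 * m := by positivity
  exact ⟨fun x => (hasDerivAt_arctan_exp_mul_sub m x₀ x).deriv,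
    tendsto_arctan_exp_mul_sub_atBot h2m x₀, tendsto_arctan_exp_mul_sub_atTop h2m x₀⟩
end

section
/- For m, A > 0, q > 0, and x₀ ∈ ℝ, define σ(x) = e^{(2m/A)x}/(1+e^{4mx})^{1/A}, α(x) = arctan(e^{2m(x-x₀)}), and κ(x) = √(q·σ(x-x₀)/(1 + q·σ(x-x₀))). Then κ satisfies the BPS equation κ'(x) = (m/A)·κ(x)·(1-κ(x)²)·cos(2α(x)) for all x ∈ ℝ. -/
/-!
With `s y = q σ (y - x₀)`, the logarithmic derivative of `σ` is
`2m/A - (4m/A) e^{4mu}/(1 + e^{4mu}) = (2m/A) (1 - e^{4mu})/(1 + e^{4mu})`, and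
`cos (2 arctan t) = (1 - t²)/(1 + t²)` identifies this with `(2m/A) cos (2α)`, so `s' = (2m/A) cos (2α) s`.
For any positive `s` with `s' = c s`, the function `κ = √(s/(1+s))` satisfies `κ' = (c/2) κ (1 - κ²)`,
because `κ² = s/(1+s)` and `1 - κ² = 1/(1+s)`.
-/
open Real

theorem Real.cos_two_mul_arctan (t : ℝ) : cos (2 * arctan t) = (1 - t ^ 2) / (1 + t ^ 2) := by
  rw [cos_two_mul, cos_sq_arctan]
  field_simp
  ring

theorem hasDerivAt_exp_mul_div_one_add_exp_mul_rpow (a b p u : ℝ) :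
    HasDerivAt (fun u ↦ exp (a * u) / (1 + exp (b * u)) ^ p)
      (exp (a * u) / (1 + exp (b * u)) ^ p * (a - p * (b * exp (b * u)) / (1 + exp (b * u)))) u := by
  have hexp (v : ℝ) : exp (a * v) / (1 + exp (b * v)) ^ p =
      exp (a * v - p * log (1 + exp (b * v))) := by
    rw [rpow_def_of_pos (by positivity), exp_sub, mul_comm (log _)]
  simp only [hexp]
  have hlog : HasDerivAt (fun v ↦ log (1 + exp (b * v))) (b * exp (b * u) / (1 + exp (b * u))) u := by
    simpa [mul_comm] using (((hasDerivAt_id u).const_mul b).exp.const_add 1).log (by positivity)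
  refine (((hasDerivAt_id u).const_mul a).sub (hlog.const_mul p)).exp.congr_deriv ?_
  simp only [Pi.sub_apply, id, mul_one]
  ring

theorem HasDerivAt.sqrt_div_one_add {s : ℝ → ℝ} {c x : ℝ} (hs : HasDerivAt s (c * s x) x)
    (hpos : 0 < s x) :
    HasDerivAt (fun y ↦ √(s y / (1 + s y)))
      (c / 2 * √(s x / (1 + s x)) * (1 - √(s x / (1 + s x)) ^ 2)) x := by
  have h1 : 0 < 1 + s x := by linarith
  have hr : 0 < s x / (1 + s x) := div_pos hpos h1
  refine (((hs.div ((hasDerivAt_const x 1).add hs) h1.ne').sqrt hr.ne')).congr_deriv ?_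
  simp only [Pi.add_apply, Pi.div_apply, zero_add]
  set k := √(s x / (1 + s x))
  have hk : k ^ 2 * (1 + s x) = s x := by
    rw [sq_sqrt hr.le]
    field_simp
  have hne : k ≠ 0 := (sqrt_pos.2 hr).ne'
  field_simp
  linear_combination (-c * (1 - s x - (k ^ 2 * (1 + s x) - s x))) * hk

theorem explicit_kappa_solves_bps_general
    (m A q x₀ : ℝ) (hq : 0 < q)
    (σ : ℝ → ℝ)
    (hσ : ∀ x, σ x = Real.exp ((2 * m / A) * x) / (1 + Real.exp (4 * m * x)) ^ (1 / A))
    (α : ℝ → ℝ) (hα : ∀ x, α x = Real.arctan (Real.exp (2 * m * (x - x₀))))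
    (κ : ℝ → ℝ)
    (hκ : ∀ x, κ x = Real.sqrt (q * σ (x - x₀) / (1 + q * σ (x - x₀)))) :
    ∀ x, deriv κ x = (m / A) * κ x * (1 - κ x ^ 2) * Real.cos (2 * α x) := by
  intro x
  have hsq : exp (2 * m * (x - x₀)) ^ 2 = exp (4 * m * (x - x₀)) := by
    rw [← exp_nat_mul]; ring_nf
  have hrate : 2 * m / A - 1 / A * (4 * m * exp (4 * m * (x - x₀))) / (1 + exp (4 * m * (x - x₀)))
      = 2 * (m / A) * cos (2 * α x) := by
    rw [hα, cos_two_mul_arctan, hsq]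
    field_simp
    ring
  have hσ' : HasDerivAt σ (2 * (m / A) * cos (2 * α x) * σ (x - x₀)) (x - x₀) := by
    rw [← hrate, hσ, show σ = _ from funext hσ]
    exact (hasDerivAt_exp_mul_div_one_add_exp_mul_rpow _ _ _ _).congr_deriv (mul_comm _ _)
  have hs : HasDerivAt (fun y ↦ q * σ (y - x₀)) (2 * (m / A) * cos (2 * α x) * (q * σ (x - x₀))) x :=
    ((hσ'.comp_sub_const x x₀).const_mul q).congr_deriv (by ring)
  have hσpos : 0 < σ (x - x₀) := by rw [hσ]; positivity
  rw [show κ = _ from funext hκ, (hs.sqrt_div_one_add (by positivity)).deriv]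
  ring

theorem explicit_kappa_solves_bps
    (m A q x₀ : ℝ) (hm : 0 < m) (hA : 0 < A) (hq : 0 < q)
    (σ : ℝ → ℝ)
    (hσ : ∀ x, σ x = Real.exp ((2 * m / A) * x) / (1 + Real.exp (4 * m * x)) ^ (1 / A))
    (α : ℝ → ℝ) (hα : ∀ x, α x = Real.arctan (Real.exp (2 * m * (x - x₀))))
    (κ : ℝ → ℝ)
    (hκ : ∀ x, κ x = Real.sqrt (q * σ (x - x₀) / (1 + q * σ (x - x₀)))) :
    ∀ x, deriv κ x = (m / A) * κ x * (1 - κ x ^ 2) * Real.cos (2 * α x) :=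
  explicit_kappa_solves_bps_general m A q x₀ hq σ hσ α hα κ hκ
end

section
/- Let κ, α : ℝ → ℝ be twice differentiable and satisfy the Euler–Lagrange equations, and define P = (1-κ²)²α' - m(1-κ²)²sin(2α) and Q = κ' - (m/A)κ(1-κ²)cos(2α). Then P and Q satisfy the first-order system P' = -2m·cos(2α)·P + 4mκ(1-κ²)·sin(2α)·Q and Q' = -(1/(A(1-κ²)³))·(κP² + m(1-κ²)³(1-3κ²)cos(2α)·Q), provided κ(x)² ≠ 1 for all x. -/
open Real

/-!
Differentiate the definitions of `P` and `Q` by the chain rule and eliminate the second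
derivatives with the Euler–Lagrange equations (using `sin 4α = 2 sin 2α cos 2α` for `P`).
For `Q`, the equation for `κ''` contains `α'² + m² sin² 2α`, which differs from
`P² / (1 - κ²)⁴` by the cross term `2 m α' sin 2α`; this term cancels against the one
produced by differentiating the factor `cos 2α` in `Q`.
-/

section

variable (m A : ℝ) {κ α : ℝ → ℝ} {x : ℝ}

theorem hasDerivAt_P (hκ : DifferentiableAt ℝ κ x) (hα : DifferentiableAt ℝ α x)
    (hα' : DifferentiableAt ℝ (deriv α) x) :
    HasDerivAt (fun y => (1 - κ y ^ 2) ^ 2 * deriv α y - m * (1 - κ y ^ 2) ^ 2 * sin (2 * α y))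
      (deriv (fun y => (1 - κ y ^ 2) ^ 2 * deriv α y) x
        + 4 * m * κ x * (1 - κ x ^ 2) * deriv κ x * sin (2 * α x)
        - 2 * m * (1 - κ x ^ 2) ^ 2 * cos (2 * α x) * deriv α x) x := by
  have hw : HasDerivAt (fun y => (1 - κ y ^ 2) ^ 2) _ x :=
    ((hκ.hasDerivAt.pow 2).const_sub 1).pow 2
  have hsin : HasDerivAt (fun y => sin (2 * α y)) _ x := (hα.hasDerivAt.const_mul 2).sin
  have hmain : HasDerivAt (fun y => (1 - κ y ^ 2) ^ 2 * deriv α y)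
      (deriv (fun y => (1 - κ y ^ 2) ^ 2 * deriv α y) x) x :=
    (hw.mul hα'.hasDerivAt).differentiableAt.hasDerivAt
  refine ((hmain.sub ((hw.mul hsin).const_mul m)).congr_deriv ?_).congr_of_eventuallyEq
    (.of_forall fun y => by simp only [Pi.mul_apply, Pi.sub_apply]; ring)
  simp only [Nat.cast_ofNat, Pi.pow_apply]
  ring

theorem hasDerivAt_Q (hκ : DifferentiableAt ℝ κ x) (hκ' : DifferentiableAt ℝ (deriv κ) x)
    (hα : DifferentiableAt ℝ α x) :
    HasDerivAt (fun y => deriv κ y - (m / A) * κ y * (1 - κ y ^ 2) * cos (2 * α y))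
      (deriv (deriv κ) x - (m / A) * (1 - 3 * κ x ^ 2) * deriv κ x * cos (2 * α x)
        + 2 * (m / A) * κ x * (1 - κ x ^ 2) * sin (2 * α x) * deriv α x) x := by
  have hw : HasDerivAt (fun y => κ y * (1 - κ y ^ 2)) _ x :=
    hκ.hasDerivAt.mul ((hκ.hasDerivAt.pow 2).const_sub 1)
  have hcos : HasDerivAt (fun y => cos (2 * α y)) _ x := (hα.hasDerivAt.const_mul 2).cos
  refine ((hκ'.hasDerivAt.sub ((hw.mul hcos).const_mul (m / A))).congr_deriv ?_)
    |>.congr_of_eventuallyEq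
    (.of_forall fun y => by simp only [Pi.mul_apply, Pi.sub_apply]; ring)
  simp only [Nat.cast_ofNat]
  ring

end

theorem PQ_system_general
    (m A : ℝ) (hA : 0 < A)
    (κ α : ℝ → ℝ)
    (hκ : Differentiable ℝ κ) (hκ' : Differentiable ℝ (deriv κ))
    (hα : Differentiable ℝ α) (hα' : Differentiable ℝ (deriv α))
    (hne : ∀ x, κ x ^ 2 ≠ 1)
    (hEL1 : ∀ x, deriv (deriv κ) x =
      -(κ x * (1 - κ x ^ 2) / A) *
        ((deriv α x) ^ 2 + m ^ 2 * Real.sin (2 * α x) ^ 2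
          - m ^ 2 * (1 - 3 * κ x ^ 2) * Real.cos (2 * α x) ^ 2 / A))
    (hEL2 : ∀ x, deriv (fun y => (1 - κ y ^ 2) ^ 2 * deriv α y) x =
      m ^ 2 * (1 - κ x ^ 2) ^ 2 * (1 - 2 * κ x ^ 2 / A) * Real.sin (4 * α x))
    (P Q : ℝ → ℝ)
    (hP : ∀ x, P x = (1 - κ x ^ 2) ^ 2 * deriv α x - m * (1 - κ x ^ 2) ^ 2 * Real.sin (2 * α x))
    (hQ : ∀ x, Q x = deriv κ x - (m / A) * κ x * (1 - κ x ^ 2) * Real.cos (2 * α x)) :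
    ∀ x, deriv P x = -2 * m * Real.cos (2 * α x) * P x
          + 4 * m * κ x * (1 - κ x ^ 2) * Real.sin (2 * α x) * Q x ∧
        deriv Q x = -(1 / (A * (1 - κ x ^ 2) ^ 3)) *
          (κ x * P x ^ 2 + m * (1 - κ x ^ 2) ^ 3 * (1 - 3 * κ x ^ 2) * Real.cos (2 * α x) * Q x) := by
  intro x
  have hw : 1 - κ x ^ 2 ≠ 0 := sub_ne_zero.mpr (hne x).symm
  rw [hP x, hQ x, funext hP, funext hQ]
  constructor
  · rw [(hasDerivAt_P m (hκ x) (hα x) (hα' x)).deriv, hEL2 x,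
      show 4 * α x = 2 * (2 * α x) by ring, sin_two_mul]
    ring
  · rw [(hasDerivAt_Q m A (hκ x) (hκ' x) (hα x)).deriv, hEL1 x]
    field_simp
    ring

theorem PQ_system
    (m A : ℝ) (hm : 0 < m) (hA : 0 < A)
    (κ α : ℝ → ℝ)
    (hκ : Differentiable ℝ κ) (hκ' : Differentiable ℝ (deriv κ))
    (hα : Differentiable ℝ α) (hα' : Differentiable ℝ (deriv α))
    (hne : ∀ x, κ x ^ 2 ≠ 1)
    (hEL1 : ∀ x, deriv (deriv κ) x =
      -(κ x * (1 - κ x ^ 2) / A) *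
        ((deriv α x) ^ 2 + m ^ 2 * Real.sin (2 * α x) ^ 2
          - m ^ 2 * (1 - 3 * κ x ^ 2) * Real.cos (2 * α x) ^ 2 / A))
    (hEL2 : ∀ x, deriv (fun y => (1 - κ y ^ 2) ^ 2 * deriv α y) x =
      m ^ 2 * (1 - κ x ^ 2) ^ 2 * (1 - 2 * κ x ^ 2 / A) * Real.sin (4 * α x))
    (P Q : ℝ → ℝ)
    (hP : ∀ x, P x = (1 - κ x ^ 2) ^ 2 * deriv α x - m * (1 - κ x ^ 2) ^ 2 * Real.sin (2 * α x))
    (hQ : ∀ x, Q x = deriv κ x - (m / A) * κ x * (1 - κ x ^ 2) * Real.cos (2 * α x)) :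
    ∀ x, deriv P x = -2 * m * Real.cos (2 * α x) * P x
          + 4 * m * κ x * (1 - κ x ^ 2) * Real.sin (2 * α x) * Q x ∧
        deriv Q x = -(1 / (A * (1 - κ x ^ 2) ^ 3)) *
          (κ x * P x ^ 2 + m * (1 - κ x ^ 2) ^ 3 * (1 - 3 * κ x ^ 2) * Real.cos (2 * α x) * Q x) :=
  PQ_system_general m A hA κ α hκ hκ' hα hα' hne hEL1 hEL2 P Q hP hQ
end

section
/- Under the hypotheses of the previous system, the quantity P² + Q² satisfies (P²+Q²)' = -4m·cos(2α)·P² + 2(4mκ(1-κ²)sin(2α) - κP/(A(1-κ²)³))·PQ - (2m/A)(1-3κ²)cos(2α)·Q². -/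
open Real

theorem PQ_square_decay_identity
    (m A : ℝ) (hm : 0 < m) (hA : 0 < A)
    (κ α : ℝ → ℝ)
    (hκ : Differentiable ℝ κ) (hκ' : Differentiable ℝ (deriv κ))
    (hα : Differentiable ℝ α) (hα' : Differentiable ℝ (deriv α))
    (hne : ∀ x, κ x ^ 2 ≠ 1)
    (hEL1 : ∀ x, deriv (deriv κ) x =
      -(κ x * (1 - κ x ^ 2) / A) *
        ((deriv α x) ^ 2 + m ^ 2 * Real.sin (2 * α x) ^ 2
          - m ^ 2 * (1 - 3 * κ x ^ 2) * Real.cos (2 * α x) ^ 2 / A))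
    (hEL2 : ∀ x, deriv (fun y => (1 - κ y ^ 2) ^ 2 * deriv α y) x =
      m ^ 2 * (1 - κ x ^ 2) ^ 2 * (1 - 2 * κ x ^ 2 / A) * Real.sin (4 * α x))
    (P Q : ℝ → ℝ)
    (hP : ∀ x, P x = (1 - κ x ^ 2) ^ 2 * deriv α x - m * (1 - κ x ^ 2) ^ 2 * Real.sin (2 * α x))
    (hQ : ∀ x, Q x = deriv κ x - (m / A) * κ x * (1 - κ x ^ 2) * Real.cos (2 * α x)) :
    ∀ x, deriv (fun y => P y ^ 2 + Q y ^ 2) x =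
      -4 * m * Real.cos (2 * α x) * P x ^ 2
        + 2 * (4 * m * κ x * (1 - κ x ^ 2) * Real.sin (2 * α x)
            - κ x * P x / (A * (1 - κ x ^ 2) ^ 3)) * (P x * Q x)
        - (2 * m / A) * (1 - 3 * κ x ^ 2) * Real.cos (2 * α x) * Q x ^ 2 := by
  intro x
  have hQe : Q = fun y => deriv κ y - (m / A) * κ y * (1 - κ y ^ 2) * Real.cos (2 * α y) :=
    funext hQ
  have hPe : P = fun y => (1 - κ y ^ 2) ^ 2 * deriv α y
      - m * (1 - κ y ^ 2) ^ 2 * Real.sin (2 * α y) := funext hP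
  subst hPe hQe
  -- basic HasDerivAt facts
  have hk := (hκ x).hasDerivAt
  have hk' := (hκ' x).hasDerivAt
  have ha := (hα x).hasDerivAt
  have ha' := (hα' x).hasDerivAt
  have h1 : HasDerivAt (fun y => 1 - κ y ^ 2)
      (-(((2:ℕ):ℝ) * κ x ^ 1 * deriv κ x)) x := (hk.pow 2).const_sub 1
  have h2 := h1.pow 2
  have hcos : HasDerivAt (fun y => Real.cos (2 * α y))
      (-Real.sin (2 * α x) * (2 * deriv α x)) x := (ha.const_mul 2).cos
  have hsin : HasDerivAt (fun y => Real.sin (2 * α y))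
      (Real.cos (2 * α x) * (2 * deriv α x)) x := (ha.const_mul 2).sin
  -- derivative of G = m * (1-κ²)² * sin(2α)
  have hG := (h2.const_mul m).mul hsin
  -- derivative of F = (1-κ²)² * deriv α
  have hF : HasDerivAt (fun y => (1 - κ y ^ 2) ^ 2 * deriv α y)
      (deriv (fun y => (1 - κ y ^ 2) ^ 2 * deriv α y) x) x := by
    exact (h2.differentiableAt.mul (hα' x)).hasDerivAt
  have hPder := hF.sub hG
  -- derivative of Q
  have hQin := ((hk.const_mul (m / A)).mul h1).mul hcos
  have hQder := hk'.sub hQin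
  have hmain := ((hPder.pow 2).add (hQder.pow 2)).deriv
  beta_reduce
  refine hmain.trans ?_
  simp only [Pi.add_apply, Pi.sub_apply, Pi.mul_apply, Pi.pow_apply]
  rw [hEL2, hEL1]
  have h4 : Real.sin (4 * α x) = 2 * Real.sin (2 * α x) * Real.cos (2 * α x) := by
    rw [show (4:ℝ) * α x = 2 * (2 * α x) by ring, Real.sin_two_mul]
  rw [h4]
  have hne1 : (1 : ℝ) - κ x ^ 2 ≠ 0 := sub_ne_zero_of_ne (Ne.symm (hne x))
  have hA0 : A ≠ 0 := ne_of_gt hA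
  push_cast
  field_simp
  ring
end
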